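/- arXiv:math/0308113 — 2 statements merged into one kernel-verified Lean document; each statement's English description precedes it below -/
import Mathlib

section
/- For any simplicial complex Γ on [n], there exists a deformation M of the Stanley-Reisner ideal I_Γ such that M is a generic monomial ideal. -/
open Finset

open scoped Classical

set_option synthInstance.maxHeartbeats 1000000

/-- The monomial `x^a` in `k[x_1,…,x_n]` with exponent vector `a : Fin n → ℕ`. -/
noncomputable def mono (k : Type*) [CommSemiring k] {n : ℕ} (a : Fin n → ℕ) :
    MvPolynomial (Fin n) k :=
  MvPolynomial.monomial (Finsupp.equivFunOnFinite.symm a) 1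

/-- The monomial ideal generated by the monomials with exponent vectors in `G`. -/
noncomputable def monIdeal (k : Type*) [CommSemiring k] {n : ℕ}
    (G : Finset (Fin n → ℕ)) : Ideal (MvPolynomial (Fin n) k) :=
  Ideal.span ((fun a => mono k a) '' (G : Set (Fin n → ℕ)))

/-- Exponent vector of the lcm of the monomials with exponents in `σ`. -/
def lcmExp {n : ℕ} (σ : Finset (Fin n → ℕ)) : Fin n → ℕ :=
  fun i => σ.sup (fun a => a i)

/-- `c` strictly divides `b`: whenever `c` has positive degree in a variable,
its degree there is strictly smaller than that of `b`. -/
def StrictlyDivides {n : ℕ} (c b : Fin n → ℕ) : Prop :=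
  ∀ i, 0 < c i → c i < b i

/-- `G` is the set of exponent vectors of the minimal generators of a *generic*
monomial ideal: no generator divides another, and for any two distinct
generators with the same positive degree in some variable there is a third
generator strictly dividing their lcm. -/
def IsGeneric {n : ℕ} (G : Finset (Fin n → ℕ)) : Prop :=
  (∀ a ∈ G, ∀ b ∈ G, a ≤ b → a = b) ∧
  ∀ a ∈ G, ∀ b ∈ G, a ≠ b → (∃ h, a h = b h ∧ 0 < a h) →
    ∃ c ∈ G, c ≠ a ∧ c ≠ b ∧ StrictlyDivides c (fun i => max (a i) (b i))

/-- `σ ⊆ G` is a face of the Scarf complex of the monomial ideal with minimal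
generating exponents `G`: its lcm is attained by no other subset of `G`. -/
def ScarfFace {n : ℕ} (G σ : Finset (Fin n → ℕ)) : Prop :=
  σ ⊆ G ∧ ∀ τ ⊆ G, τ ≠ σ → lcmExp τ ≠ lcmExp σ

/-- The dimension (as an integer, so the empty-complex value `-1` is allowed)
of the Scarf complex `Δ_M`: one less than the largest cardinality of a face. -/
noncomputable def scarfDim {n : ℕ} (G : Finset (Fin n → ℕ)) : ℤ :=
  (((G.powerset.filter (fun σ => ScarfFace G σ)).sup Finset.card : ℕ) : ℤ) - 1

/-- `σ` is a face of `V(M)`, the simplicial complex whose Stanley-Reisner ideal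
is `rad M`: no generator of `M` has support contained in `σ`. -/
def VFace {n : ℕ} (G : Finset (Fin n → ℕ)) (σ : Finset (Fin n)) : Prop :=
  ∀ a ∈ G, ¬ (Finset.univ.filter (fun i => 0 < a i) ⊆ σ)

/-- The dimension of `V(M)` as an integer. -/
noncomputable def vDim {n : ℕ} (G : Finset (Fin n → ℕ)) : ℤ :=
  ((((Finset.univ : Finset (Fin n)).powerset.filter (fun σ => VFace G σ)).sup
    Finset.card : ℕ) : ℤ) - 1

/-- The quotient `S/I` of the polynomial ring `S = k[x_1,…,x_n]` is
Cohen-Macaulay: some regular sequence on `S/I` consisting of elements of the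
irrelevant maximal ideal `⟨x_1,…,x_n⟩` has length equal to the Krull dimension
of `S/I`. -/
def IsCMQuotient (k : Type*) [Field k] {n : ℕ}
    (I : Ideal (MvPolynomial (Fin n) k)) : Prop :=
  ∃ rs : List (MvPolynomial (Fin n) k),
    (∀ r ∈ rs, r ∈ Ideal.span (Set.range (MvPolynomial.X : Fin n → MvPolynomial (Fin n) k))) ∧
    RingTheory.Sequence.IsRegular (MvPolynomial (Fin n) k ⧸ I)
      (rs.map (Ideal.Quotient.mk I)) ∧
    (rs.length : WithBot (WithTop ℕ)) = ringKrullDim (MvPolynomial (Fin n) k ⧸ I)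

/-- A simplicial complex on the vertex set `V ⊆ Fin n`, given as its finite set of faces. -/
def IsComplexOn {n : ℕ} (V : Finset (Fin n)) (Γ : Finset (Finset (Fin n))) : Prop :=
  (∀ i ∈ V, ({i} : Finset (Fin n)) ∈ Γ) ∧ (∀ σ ∈ Γ, σ ⊆ V) ∧
    (∀ σ ∈ Γ, ∀ τ ⊆ σ, τ ∈ Γ)

/-- `σ` is a minimal non-face of `Γ`. -/
def IsMinNonFace {n : ℕ} (Γ : Finset (Finset (Fin n))) (σ : Finset (Fin n)) : Prop :=
  σ ∉ Γ ∧ ∀ i ∈ σ, σ.erase i ∈ Γ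

/-- `σ` is a facet (maximal face) of `Γ`. -/
def IsFacet {n : ℕ} (Γ : Finset (Finset (Fin n))) (σ : Finset (Fin n)) : Prop :=
  σ ∈ Γ ∧ ∀ τ ∈ Γ, σ ⊆ τ → τ = σ

/-- `Γ` has (simplicial) dimension `d - 1`. -/
def HasDim {n : ℕ} (Γ : Finset (Finset (Fin n))) (d : ℕ) : Prop :=
  (∀ σ ∈ Γ, σ.card ≤ d) ∧ (∃ σ ∈ Γ, σ.card = d)

/-- The finite set of minimal non-faces of `Γ`. -/
noncomputable def minNonFaces {n : ℕ} (Γ : Finset (Finset (Fin n))) :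
    Finset (Finset (Fin n)) :=
  (Finset.univ : Finset (Finset (Fin n))).filter (fun σ => IsMinNonFace Γ σ)

/-!
Deform the generator of each minimal non-face `σ` to `∏_{i ∈ σ} x_i^{c_σ}`, with the `c_σ > 0`
pairwise distinct.
Then two distinct generators never share a positive degree in any variable, so genericity
reduces to minimality of the generators, which holds because minimal non-faces form an antichain.
-/

theorem IsMinNonFace.eq_of_subset {n : ℕ} {Γ : Finset (Finset (Fin n))}
    (hdown : ∀ σ ∈ Γ, ∀ τ ⊆ σ, τ ∈ Γ) {σ τ : Finset (Fin n)}
    (hσ : IsMinNonFace Γ σ) (hτ : IsMinNonFace Γ τ) (hsub : σ ⊆ τ) : σ = τ := by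
  by_contra hne
  obtain ⟨i, hiτ, hiσ⟩ := exists_of_ssubset (hsub.ssubset_of_ne hne)
  have hσ_sub : σ ⊆ τ.erase i := fun j hj => mem_erase.mpr ⟨fun h => hiσ (h ▸ hj), hsub hj⟩
  exact hσ.1 (hdown _ (hτ.2 i hiτ) _ hσ_sub)

theorem isGeneric_of_degrees_distinct {n : ℕ} {G : Finset (Fin n → ℕ)}
    (hmin : ∀ a ∈ G, ∀ b ∈ G, a ≤ b → a = b)
    (hdeg : ∀ a ∈ G, ∀ b ∈ G, ∀ i, a i = b i → 0 < a i → a = b) : IsGeneric G :=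
  ⟨hmin, fun a ha b hb hne ⟨i, hab, hpos⟩ => (hne (hdeg a ha b hb i hab hpos)).elim⟩

section ScaledIndicator

variable {α : Type*} [DecidableEq α]

def scaledIndicator (f : Finset α → ℕ) (σ : Finset α) : α → ℕ :=
  fun i => if i ∈ σ then f σ else 0

variable {f : Finset α → ℕ}

theorem scaledIndicator_pos_iff (hf : ∀ σ, 0 < f σ) {σ : Finset α} {i : α} :
    0 < scaledIndicator f σ i ↔ i ∈ σ := by
  by_cases hi : i ∈ σ <;> simp [scaledIndicator, hi, hf]

theorem subset_of_scaledIndicator_le (hf : ∀ σ, 0 < f σ) {σ τ : Finset α}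
    (hle : scaledIndicator f σ ≤ scaledIndicator f τ) : σ ⊆ τ := fun i hi =>
  (scaledIndicator_pos_iff hf).mp <|
    ((scaledIndicator_pos_iff hf).mpr hi).trans_le (hle i)

theorem eq_of_scaledIndicator_eq_pos (hf : Function.Injective f) {σ τ : Finset α} {i : α}
    (heq : scaledIndicator f σ i = scaledIndicator f τ i) (hpos : 0 < scaledIndicator f σ i) :
    σ = τ := by
  unfold scaledIndicator at heq hpos
  by_cases hσ : i ∈ σ <;> by_cases hτ : i ∈ τ <;> simp_all [hf.eq_iff]

end ScaledIndicator

/-- For any simplicial complex `Γ` on `[n]` there is a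
deformation of the Stanley-Reisner ideal `I_Γ` (whose minimal generators
correspond to the minimal non-faces of `Γ`) that is a generic monomial ideal:
an assignment `e` of exponent vectors, one to each minimal non-face, with
support exactly that non-face, whose image is a generic set of generators. -/
theorem exists_generic_deformation {n : ℕ} (Γ : Finset (Finset (Fin n)))
    (hΓ : IsComplexOn Finset.univ Γ) :
    ∃ e : Finset (Fin n) → (Fin n → ℕ),
      (∀ σ ∈ minNonFaces Γ, ∀ i : Fin n, 0 < e σ i ↔ i ∈ σ) ∧
      IsGeneric ((minNonFaces Γ).image e) := by
  set f : Finset (Fin n) → ℕ := fun σ => Encodable.encode σ + 1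
  have hf_pos : ∀ σ, 0 < f σ := fun σ => Nat.succ_pos _
  have hf_inj : Function.Injective f := fun σ τ h =>
    Encodable.encode_injective (Nat.succ_injective h)
  refine ⟨scaledIndicator f, fun σ _ i => scaledIndicator_pos_iff hf_pos, ?_⟩
  apply isGeneric_of_degrees_distinct
  · simp only [forall_mem_image]
    intro σ hσ τ hτ hle
    rw [IsMinNonFace.eq_of_subset hΓ.2.2 (mem_filter.mp hσ).2 (mem_filter.mp hτ).2
      (subset_of_scaledIndicator_le hf_pos hle)]
  · simp only [forall_mem_image]
    intro σ _ τ _ i heq hpos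
    rw [eq_of_scaledIndicator_eq_pos hf_inj heq hpos]
end

section
/- The ideal M = ⟨x_1x_3, x_1^2x_2^2x_4^2, x_2^2x_3^2x_4^2⟩ in k[x_1,x_2,x_3,x_4] is a generic monomial ideal, its radical is ⟨x_1x_3, x_1x_2x_4, x_2x_3x_4⟩, and its Scarf complex has dimension 1. -/
open Finset

open scoped Classical

set_option synthInstance.maxHeartbeats 1000000

/-!
The radical of a monomial ideal is generated by the squarefree parts `x^(supp a)` of its
generators `x^a`. A power of `x^(supp a)` is divisible by `x^a`. Conversely, if a monomial `x^m`
of some `f ∈ √M` is divisible by no `x^(supp a)`, the variables missing from `x^m` meet the support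
of every generator, so `M` lies in the prime ideal they generate (the kernel of setting them to
`0`); hence so does `f`, and `x^m` would involve one of them.

In the Scarf complex of `M`, the edge `{x₁x₃, x₁²x₂²x₄²}` is a face: any set of generators with
the same lcm `x₁²x₂²x₃x₄²` avoids `x₂²x₃²x₄²`, and must contain `x₁x₃` and `x₁²x₂²x₄²`, the only
generators dividing that lcm with the top degree in `x₃`, resp. `x₁`. The full triangle is not a
face, because `x₁x₃` divides the lcm of the other two generators.
-/

open MvPolynomial

section KillVars

variable {σ R : Type*} [CommRing R]

noncomputable def killVars (s : Set σ) : MvPolynomial σ R →ₐ[R] MvPolynomial σ R :=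
  aeval fun i => if i ∈ s then 0 else X i

theorem sub_killVars_mem_span_X (s : Set σ) (f : MvPolynomial σ R) :
    f - killVars s f ∈ Ideal.span (X '' s : Set (MvPolynomial σ R)) := by
  induction f using MvPolynomial.induction_on with
  | C r => simp [killVars]
  | add p q hp hq =>
      rw [map_add, add_sub_add_comm]
      exact Ideal.add_mem _ hp hq
  | mul_X p i hp =>
      by_cases hi : i ∈ s
      · have hX : X i ∈ Ideal.span (X '' s : Set (MvPolynomial σ R)) :=
          Ideal.subset_span ⟨i, hi, rfl⟩
        simpa [killVars, hi] using Ideal.mul_mem_left _ p hX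
      · have h : p * X i - killVars s (p * X i) = (p - killVars s p) * X i := by
          simp [killVars, hi, sub_mul]
        rw [h]
        exact Ideal.mul_mem_right _ _ hp

theorem mem_span_X_of_killVars_eq_zero {s : Set σ} {f : MvPolynomial σ R}
    (h : killVars s f = 0) : f ∈ Ideal.span (X '' s : Set (MvPolynomial σ R)) := by
  simpa [h] using sub_killVars_mem_span_X s f

theorem killVars_monomial {s : Set σ} {m : σ →₀ ℕ} {i : σ} (hi : i ∈ s) (hm : m i ≠ 0)
    (r : R) : killVars s (monomial m r) = 0 := by
  rw [killVars, aeval_monomial, Finsupp.prod, Finset.prod_eq_zero (Finsupp.mem_support_iff.mpr hm)]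
  · simp
  · simp [hi, zero_pow hm]

end KillVars

section MonomialIdeal

variable {k : Type*} {n : ℕ}

def supportExp (a : Fin n → ℕ) : Fin n → ℕ := fun i => if a i = 0 then 0 else 1

theorem mono_pow [CommSemiring k] (a : Fin n → ℕ) (p : ℕ) : mono k a ^ p = mono k (p • a) := by
  rw [mono, mono, monomial_pow, one_pow]
  congr 2
  ext i
  simp

theorem mono_dvd_mono [CommSemiring k] {a b : Fin n → ℕ} (h : a ≤ b) : mono k a ∣ mono k b := by
  refine ⟨mono k (b - a), ?_⟩
  rw [mono, mono, mono, monomial_mul, one_mul]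
  congr 2
  ext i
  simp [add_tsub_cancel_of_le (h i)]

theorem mem_monIdeal_iff [CommSemiring k] {G : Finset (Fin n → ℕ)} {f : MvPolynomial (Fin n) k} :
    f ∈ monIdeal k G ↔ ∀ m ∈ f.support, ∃ a ∈ G, ∀ i, a i ≤ m i := by
  rw [monIdeal, show (fun a => mono k a) =
      (fun m => monomial m (1 : k)) ∘ Finsupp.equivFunOnFinite.symm from rfl,
    Set.image_comp, mem_ideal_span_monomial_image]
  simp only [Set.exists_mem_image, Finset.mem_coe, Finsupp.le_def,
    Finsupp.equivFunOnFinite_symm_apply_apply]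

theorem monIdeal_le_ker_killVars [CommRing k] {G : Finset (Fin n → ℕ)} {s : Set (Fin n)}
    (hs : ∀ a ∈ G, ∃ i ∈ s, a i ≠ 0) : monIdeal k G ≤ RingHom.ker (killVars (R := k) s) := by
  rw [monIdeal, Ideal.span_le]
  rintro _ ⟨a, ha, rfl⟩
  obtain ⟨i, hi, hai⟩ := hs a ha
  exact killVars_monomial hi (by simpa using hai) 1

theorem le_smul_supportExp (a : Fin n → ℕ) : a ≤ (Finset.univ.sup a) • supportExp a := by
  intro i
  by_cases hi : a i = 0
  · simp [hi]
  · simpa [supportExp, hi] using Finset.le_sup (f := a) (Finset.mem_univ i)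

theorem mono_supportExp_mem_radical [CommSemiring k] {G : Finset (Fin n → ℕ)} {a : Fin n → ℕ}
    (ha : a ∈ G) : mono k (supportExp a) ∈ (monIdeal k G).radical := by
  refine ⟨Finset.univ.sup a, ?_⟩
  rw [mono_pow]
  exact Ideal.mem_of_dvd _ (mono_dvd_mono (le_smul_supportExp a)) (Ideal.subset_span ⟨a, ha, rfl⟩)

theorem radical_monIdeal [CommRing k] [IsDomain k] (G : Finset (Fin n → ℕ)) :
    (monIdeal k G).radical = monIdeal k (G.image supportExp) := by
  refine le_antisymm (fun f hf => mem_monIdeal_iff.mpr fun m hm => ?_) ?_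
  · by_contra! hnone
    have hcover : ∀ a ∈ G, ∃ i ∈ {i | m i = 0}, a i ≠ 0 := by
      intro a ha
      obtain ⟨i, hi⟩ := hnone _ (Finset.mem_image_of_mem _ ha)
      simp only [supportExp] at hi
      split_ifs at hi with hai
      · omega
      · exact ⟨i, by simp only [Set.mem_ofPred_eq]; omega, hai⟩
    have hker : killVars {i | m i = 0} f = 0 :=
      (RingHom.ker_isPrime _).radical_le_iff.mpr (monIdeal_le_ker_killVars hcover) hf
    obtain ⟨i, hi, hmi⟩ := mem_ideal_span_X_image.mp (mem_span_X_of_killVars_eq_zero hker) m hm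
    exact hmi hi
  · rw [monIdeal, Ideal.span_le]
    rintro _ ⟨_, hb, rfl⟩
    obtain ⟨a, ha, rfl⟩ := Finset.mem_image.mp hb
    exact mono_supportExp_mem_radical ha

end MonomialIdeal

section ScarfComplex

variable {n : ℕ}

theorem lcmExp_eq_sup (σ : Finset (Fin n → ℕ)) : lcmExp σ = σ.sup id := by
  funext i
  simp [lcmExp, Finset.sup_apply]

theorem le_lcmExp {σ : Finset (Fin n → ℕ)} {a : Fin n → ℕ} (ha : a ∈ σ) : a ≤ lcmExp σ :=
  lcmExp_eq_sup σ ▸ Finset.le_sup (f := id) ha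

theorem scarfFace_of_unique_max {G σ : Finset (Fin n → ℕ)} (hσG : σ ⊆ G)
    (hout : ∀ x ∈ G, x ∉ σ → ¬ x ≤ lcmExp σ)
    (hin : ∀ x ∈ σ, ∃ i, 0 < x i ∧ ∀ y ∈ G, y ≤ lcmExp σ → y ≠ x → y i < x i) :
    ScarfFace G σ := by
  refine ⟨hσG, fun τ hτG hne hlcm => hne (subset_antisymm (fun x hx => ?_) (fun x hx => ?_))⟩
  · by_contra hxσ
    exact hout x (hτG hx) hxσ (hlcm ▸ le_lcmExp hx)
  · by_contra hxτ
    obtain ⟨i, hpos, hmax⟩ := hin x hx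
    have hlt : lcmExp τ i < x i := Finset.sup_lt_iff hpos |>.mpr fun y hy =>
      hmax y (hτG hy) (hlcm ▸ le_lcmExp hy) (ne_of_mem_of_not_mem hy hxτ)
    exact absurd (hlcm ▸ le_lcmExp hx i) (not_le.mpr hlt)

theorem not_scarfFace_of_le_lcmExp_erase {G σ : Finset (Fin n → ℕ)} {a : Fin n → ℕ} (ha : a ∈ σ)
    (h : a ≤ lcmExp (σ.erase a)) : ¬ ScarfFace G σ := by
  rintro ⟨hσG, hscarf⟩
  refine hscarf (σ.erase a) ((σ.erase_subset a).trans hσG) (Finset.erase_ne_self.mpr ha) ?_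
  simp only [lcmExp_eq_sup] at h ⊢
  conv_rhs => rw [← Finset.insert_erase ha]
  rw [Finset.sup_insert, id, sup_eq_right.mpr h]

theorem scarfDim_eq_card_sub_one {G σ : Finset (Fin n → ℕ)} (hσ : ScarfFace G σ)
    (hmax : ∀ τ, ScarfFace G τ → τ.card ≤ σ.card) : scarfDim G = σ.card - 1 := by
  have hsup : (G.powerset.filter (fun τ => ScarfFace G τ)).sup Finset.card = σ.card :=
    le_antisymm (Finset.sup_le fun τ hτ => hmax τ (Finset.mem_filter.mp hτ).2)
      (Finset.le_sup (Finset.mem_filter.mpr ⟨Finset.mem_powerset.mpr hσ.1, hσ⟩))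
  rw [scarfDim, hsup]

end ScarfComplex

theorem isGeneric_gens : IsGeneric ({![1,0,1,0], ![2,2,0,2], ![0,2,2,2]} : Finset (Fin 4 → ℕ)) := by
  -- only `x₁²x₂²x₄²` and `x₂²x₃²x₄²` share a positive degree, and `x₁x₃` strictly divides their lcm
  simp only [IsGeneric, StrictlyDivides, Finset.forall_mem_insert, Finset.exists_mem_insert,
    Finset.mem_singleton, forall_eq, exists_eq_left]
  simp [Pi.le_def, funext_iff, Fin.forall_fin_succ, Fin.exists_fin_succ]

theorem image_supportExp_gens :
    ({![1,0,1,0], ![2,2,0,2], ![0,2,2,2]} : Finset (Fin 4 → ℕ)).image supportExp =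
      {![1,0,1,0], ![1,1,0,1], ![0,1,1,1]} := by
  simp only [Finset.image_insert, Finset.image_singleton]
  congr 2 <;> decide

theorem scarfFace_pair :
    ScarfFace {![1,0,1,0], ![2,2,0,2], ![0,2,2,2]}
      ({![1,0,1,0], ![2,2,0,2]} : Finset (Fin 4 → ℕ)) := by
  have hlcm : lcmExp ({![1,0,1,0], ![2,2,0,2]} : Finset (Fin 4 → ℕ)) = ![2,2,1,2] := by
    funext i
    fin_cases i <;> simp [lcmExp]
  refine scarfFace_of_unique_max (Finset.insert_subset_insert _ (by simp)) ?_ ?_ <;>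
    simp only [hlcm, Finset.mem_insert, Finset.mem_singleton]
  · rintro x (rfl | rfl | rfl) hxσ hle
    exacts [hxσ (.inl rfl), hxσ (.inr rfl), absurd (hle 2) (by decide)]
  · rintro x (rfl | rfl)
    · refine ⟨2, by decide, ?_⟩
      rintro y (rfl | rfl | rfl) hy hne
      exacts [absurd rfl hne, by decide, absurd (hy 2) (by decide)]
    · refine ⟨0, by decide, ?_⟩
      rintro y (rfl | rfl | rfl) hy hne
      exacts [by decide, absurd rfl hne, by decide]

theorem not_scarfFace_gens :
    ¬ ScarfFace {![1,0,1,0], ![2,2,0,2], ![0,2,2,2]}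
      ({![1,0,1,0], ![2,2,0,2], ![0,2,2,2]} : Finset (Fin 4 → ℕ)) := by
  refine not_scarfFace_of_le_lcmExp_erase (a := ![1,0,1,0]) (by simp) ?_
  rw [Finset.erase_insert (by decide)]
  intro i
  fin_cases i <;> simp [lcmExp]

theorem scarfDim_gens :
    scarfDim ({![1,0,1,0], ![2,2,0,2], ![0,2,2,2]} : Finset (Fin 4 → ℕ)) = 1 := by
  have hcard : ({![1,0,1,0], ![2,2,0,2], ![0,2,2,2]} : Finset (Fin 4 → ℕ)).card = 3 :=
    Finset.card_eq_three.mpr ⟨_, _, _, by decide, by decide, by decide, rfl⟩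
  have hpair : ({![1,0,1,0], ![2,2,0,2]} : Finset (Fin 4 → ℕ)).card = 2 :=
    Finset.card_pair (by decide)
  have hmax : ∀ τ, ScarfFace {![1,0,1,0], ![2,2,0,2], ![0,2,2,2]} τ → τ.card ≤ 2 := by
    intro τ hτ
    by_contra! hlt
    exact not_scarfFace_gens (Finset.eq_of_subset_of_card_le hτ.1 (by omega) ▸ hτ)
  rw [scarfDim_eq_card_sub_one scarfFace_pair (hpair ▸ hmax), hpair]
  rfl

/-- The ideal `M = ⟨x₁x₃, x₁²x₂²x₄², x₂²x₃²x₄²⟩` in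
`k[x₁,x₂,x₃,x₄]` is generic, its radical is `⟨x₁x₃, x₁x₂x₄, x₂x₃x₄⟩`, and its
Scarf complex has dimension 1. -/
theorem example_matroid_deformation (k : Type*) [Field k] :
    IsGeneric ({![1,0,1,0], ![2,2,0,2], ![0,2,2,2]} : Finset (Fin 4 → ℕ)) ∧
    (monIdeal k ({![1,0,1,0], ![2,2,0,2], ![0,2,2,2]} : Finset (Fin 4 → ℕ))).radical
      = monIdeal k ({![1,0,1,0], ![1,1,0,1], ![0,1,1,1]} : Finset (Fin 4 → ℕ)) ∧
    scarfDim ({![1,0,1,0], ![2,2,0,2], ![0,2,2,2]} : Finset (Fin 4 → ℕ)) = 1 :=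
  ⟨isGeneric_gens, by rw [radical_monIdeal, image_supportExp_gens], scarfDim_gens⟩
end
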